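/- The two-qubit density matrix ρ̃ = (1/4)·(1₄ + (1/2)·σ₃⊗1₂ + (1/2)·1₂⊗σ₃ + (1/√3)·(σ₁⊗σ₂ + σ₂⊗σ₁ + σ₃⊗σ₃)) is entangled, i.e. not separable: there exists no finite family of weights p_k ≥ 0 with Σ_k p_k = 1 and 2×2 density matrices A_k, B_k such that ρ̃ = Σ_k p_k · (A_k ⊗ B_k). -/

import Mathlib

/-!
Peres' criterion: transposing the second factor of a product state `A ⊗ B` gives `A ⊗ Bᵀ`, which
is again positive semidefinite, so the partial transpose of every separable state is positive
semidefinite. The partial transpose of `ρ̃` has the negative eigenvalue `(1 - √3) / 4`.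
-/

open Matrix Complex BigOperators Kronecker
open scoped ComplexOrder

/-- The three Pauli matrices σ₁, σ₂, σ₃ (indexed by `Fin 3`). -/
noncomputable def pauli : Fin 3 → Matrix (Fin 2) (Fin 2) ℂ
  | 0 => !![0, 1; 1, 0]
  | 1 => !![0, -Complex.I; Complex.I, 0]
  | 2 => !![1, 0; 0, -1]

/-- A two-qubit state is separable if it is a finite convex combination of Kronecker
products of 2×2 density matrices. -/
def SeparableState (ρ : Matrix (Fin 2 × Fin 2) (Fin 2 × Fin 2) ℂ) : Prop :=
  ∃ (n : ℕ) (p : Fin n → ℝ) (A B : Fin n → Matrix (Fin 2) (Fin 2) ℂ),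
    (∀ k, 0 ≤ p k) ∧ (∑ k, p k = 1) ∧
    (∀ k, (A k).PosSemidef ∧ (A k).trace = 1) ∧
    (∀ k, (B k).PosSemidef ∧ (B k).trace = 1) ∧
    ρ = ∑ k, (p k : ℂ) • (A k ⊗ₖ B k)

/-- The state
`ρ̃ = (1/4)(1₄ + (1/2) σ₃⊗1 + (1/2) 1⊗σ₃ + (1/√3)(σ₁⊗σ₂ + σ₂⊗σ₁ + σ₃⊗σ₃))`. -/
noncomputable def rhoTildeMax : Matrix (Fin 2 × Fin 2) (Fin 2 × Fin 2) ℂ :=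
  (1 / 4 : ℂ) • ((1 : Matrix (Fin 2 × Fin 2) (Fin 2 × Fin 2) ℂ)
    + (1 / 2 : ℂ) • (pauli 2 ⊗ₖ (1 : Matrix (Fin 2) (Fin 2) ℂ))
    + (1 / 2 : ℂ) • ((1 : Matrix (Fin 2) (Fin 2) ℂ) ⊗ₖ pauli 2)
    + ((1 / Real.sqrt 3 : ℝ) : ℂ) •
        (pauli 0 ⊗ₖ pauli 1 + pauli 1 ⊗ₖ pauli 0 + pauli 2 ⊗ₖ pauli 2))

namespace Matrix

variable {m n : Type*}

section CommSemiring

variable {R : Type*} [CommSemiring R]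

def partialTranspose : Matrix (m × n) (m × n) R →ₗ[R] Matrix (m × n) (m × n) R where
  toFun M i j := M (i.1, j.2) (j.1, i.2)
  map_add' _ _ := rfl
  map_smul' _ _ := rfl

theorem partialTranspose_apply (M : Matrix (m × n) (m × n) R) (i j : m × n) :
    partialTranspose M i j = M (i.1, j.2) (j.1, i.2) :=
  rfl

theorem partialTranspose_kronecker (A : Matrix m m R) (B : Matrix n n R) :
    partialTranspose (A ⊗ₖ B) = A ⊗ₖ Bᵀ := by
  ext i j
  simp [partialTranspose_apply]

end CommSemiring

theorem posSemidef_partialTranspose_sum_smul_kronecker {𝕜 ι : Type*} [RCLike 𝕜] [Fintype m]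
    [Fintype n] (s : Finset ι) {p : ι → ℝ} {A : ι → Matrix m m 𝕜} {B : ι → Matrix n n 𝕜}
    (hp : ∀ k ∈ s, 0 ≤ p k) (hA : ∀ k ∈ s, (A k).PosSemidef) (hB : ∀ k ∈ s, (B k).PosSemidef) :
    (partialTranspose (∑ k ∈ s, (p k : 𝕜) • (A k ⊗ₖ B k))).PosSemidef := by
  rw [map_sum]
  refine posSemidef_sum s fun k hk => ?_
  rw [map_smul, partialTranspose_kronecker, ← RCLike.real_smul_eq_coe_smul]
  exact ((hA k hk).kronecker (hB k hk).transpose).smul (hp k hk)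

end Matrix

theorem SeparableState.posSemidef_partialTranspose {ρ : Matrix (Fin 2 × Fin 2) (Fin 2 × Fin 2) ℂ}
    (hρ : SeparableState ρ) : (partialTranspose ρ).PosSemidef := by
  obtain ⟨n, p, A, B, hp, -, hA, hB, rfl⟩ := hρ
  exact posSemidef_partialTranspose_sum_smul_kronecker _ (fun k _ => hp k)
    (fun k _ => (hA k).1) (fun k _ => (hB k).1)

/-- An eigenvector of the partial transpose of `ρ̃` for its eigenvalue `(1 - √3) / 4`. -/
noncomputable def rhoTildeMaxWitness : Fin 2 × Fin 2 → ℂ :=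
  fun x => !![0, 1; -I, 0] x.1 x.2

theorem star_dotProduct_partialTranspose_rhoTildeMax_mulVec :
    star rhoTildeMaxWitness ⬝ᵥ partialTranspose rhoTildeMax *ᵥ rhoTildeMaxWitness =
      ((1 - √3) / 2 : ℝ) := by
  have h3 : 3 / √3 = √3 := by
    rw [div_eq_iff (by positivity), Real.mul_self_sqrt (by norm_num)]
  simp only [rhoTildeMaxWitness, dotProduct, mulVec, Fintype.sum_prod_type, Fin.sum_univ_two,
    Pi.star_apply, partialTranspose_apply, rhoTildeMax, pauli, Matrix.add_apply, Matrix.smul_apply,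
    kroneckerMap_apply, one_apply]
  norm_num [Complex.ext_iff]
  linarith

theorem not_posSemidef_partialTranspose_rhoTildeMax :
    ¬ (partialTranspose rhoTildeMax).PosSemidef := by
  intro h
  have hv := h.dotProduct_mulVec_nonneg rhoTildeMaxWitness
  rw [star_dotProduct_partialTranspose_rhoTildeMax_mulVec, Complex.zero_le_real] at hv
  have : (1 : ℝ) < √3 := by
    rw [Real.lt_sqrt zero_le_one]
    norm_num
  linarith

/-- The state `ρ̃` (with `a = b = c = 1/√3`) is entangled, i.e. not
separable. -/
theorem rhoTildeMax_entangled : ¬ SeparableState rhoTildeMax :=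
  fun h => not_posSemidef_partialTranspose_rhoTildeMax h.posSemidef_partialTranspose
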